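/- The map p₁ ↦ A₁^∞(p₁, ψ₁), sending a boundary parametrization to the far-field integral operator value, is Fréchet differentiable with derivative (A'^∞₁[p₁, ψ₁]q)(t) = iκγ ∫₀^{2π} e^{−iκ x̂(t)·p₁(τ)} x̂(t)·q(τ) ψ₁(τ) dτ. -/

import Mathlib

open scoped Real

/-- The unit direction `x̂(t) = (cos t, sin t)` on the unit circle. -/
noncomputable def xhat (t : ℝ) : EuclideanSpace ℝ (Fin 2) :=
  (WithLp.equiv 2 (Fin 2 → ℝ)).symm ![Real.cos t, Real.sin t]

lemma norm_xhat (t : ℝ) : ‖xhat t‖ = 1 := by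
  rw [xhat, EuclideanSpace.norm_eq]
  simp [Fin.sum_univ_two, Real.cos_sq_add_sin_sq]

/-- **Fréchet differentiability of the parametrized far-field operator.**
With `γ = e^{iπ/4}/√(8κπ)`, `x̂(t) = (cos t, sin t)` and
`A₁^∞(p₁,ψ₁)(t) = -γ ∫₀^{2π} e^{-iκ x̂(t)·p₁(τ)} ψ₁(τ) dτ`,
the map `p₁ ↦ A₁^∞(p₁,ψ₁)` is Fréchet differentiable with respect to `p₁` in the
supremum norm, with derivative
`(A'^∞₁[p₁,ψ₁]q)(t) = iκγ ∫₀^{2π} e^{-iκ x̂(t)·p₁(τ)} x̂(t)·q(τ) ψ₁(τ) dτ`: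
the remainder is `o(‖q‖_∞)` uniformly in `t`. -/
theorem farfield_operator_frechet_differentiable
    (κ : ℝ) (hκ : 0 < κ) (γ : ℂ)
    (hγ : γ = Complex.exp (Complex.I * (π / 4)) / Real.sqrt (8 * κ * π))
    (p₁ : ℝ → EuclideanSpace ℝ (Fin 2)) (hp₁ : Continuous p₁)
    (hp₁per : ∀ τ, p₁ (τ + 2 * π) = p₁ τ)
    (ψ₁ : ℝ → ℂ) (hψ₁ : Continuous ψ₁) (hψ₁per : ∀ τ, ψ₁ (τ + 2 * π) = ψ₁ τ) :
    ∀ ε > (0 : ℝ), ∃ δ > (0 : ℝ), ∀ q : ℝ → EuclideanSpace ℝ (Fin 2),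
      Continuous q → (∀ τ, q (τ + 2 * π) = q τ) → (∀ τ, ‖q τ‖ ≤ δ) →
      ∀ t : ℝ,
        ‖(-γ * ∫ τ in (0 : ℝ)..(2 * π),
              Complex.exp (-(Complex.I * κ * ((inner ℝ (xhat t) (p₁ τ + q τ) : ℝ) : ℂ))) * ψ₁ τ)
          - (-γ * ∫ τ in (0 : ℝ)..(2 * π),
              Complex.exp (-(Complex.I * κ * ((inner ℝ (xhat t) (p₁ τ) : ℝ) : ℂ))) * ψ₁ τ)
          - Complex.I * κ * γ * ∫ τ in (0 : ℝ)..(2 * π),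
              Complex.exp (-(Complex.I * κ * ((inner ℝ (xhat t) (p₁ τ) : ℝ) : ℂ))) *
                ((inner ℝ (xhat t) (q τ) : ℝ) : ℂ) * ψ₁ τ‖
        ≤ ε * ⨆ τ : ℝ, ‖q τ‖ := by
  intro ε hε
  have hπ : (0:ℝ) < π := Real.pi_pos
  -- bound for ψ₁ on [0, 2π]
  obtain ⟨C₀, hC₀⟩ := IsCompact.exists_bound_of_continuousOn (isCompact_Icc (a := (0:ℝ))
    (b := 2 * π)) hψ₁.continuousOn
  set C : ℝ := max C₀ 0 with hCdef
  have hC0 : 0 ≤ C := le_max_right _ _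
  have hC : ∀ τ ∈ Set.Icc (0:ℝ) (2*π), ‖ψ₁ τ‖ ≤ C := fun τ hτ =>
    (hC₀ τ hτ).trans (le_max_left _ _)
  set D : ℝ := (‖γ‖ + 1) * (2 * π) * κ ^ 2 * (C + 1) with hDdef
  have hD : 0 < D := by positivity
  refine ⟨min (1 / κ) (ε / D), lt_min (by positivity) (by positivity), ?_⟩
  intro q hq hqper hqδ t
  set S : ℝ := ⨆ τ : ℝ, ‖q τ‖ with hSdef
  have hbdd : BddAbove (Set.range fun τ => ‖q τ‖) :=
    ⟨min (1 / κ) (ε / D), by rintro x ⟨τ, rfl⟩; exact hqδ τ⟩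
  have hqS : ∀ τ, ‖q τ‖ ≤ S := fun τ => le_ciSup hbdd τ
  have hS0 : 0 ≤ S := le_trans (norm_nonneg (q 0)) (hqS 0)
  -- abbreviations
  set a : ℝ → ℝ := fun τ => (inner ℝ (xhat t) (p₁ τ) : ℝ) with hadef
  set b : ℝ → ℝ := fun τ => (inner ℝ (xhat t) (q τ) : ℝ) with hbdef
  have ha_cont : Continuous a := (continuous_const.inner hp₁)
  have hb_cont : Continuous b := (continuous_const.inner hq)
  have hb_le : ∀ τ, |b τ| ≤ ‖q τ‖ := by
    intro τ
    calc |b τ| ≤ ‖xhat t‖ * ‖q τ‖ := abs_real_inner_le_norm _ _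
    _ = ‖q τ‖ := by rw [norm_xhat, one_mul]
  -- continuity of the integrands
  have hc1 : Continuous fun τ =>
      Complex.exp (-(Complex.I * κ * ((a τ + b τ : ℝ) : ℂ))) * ψ₁ τ := by
    fun_prop
  have hc2 : Continuous fun τ =>
      Complex.exp (-(Complex.I * κ * ((a τ : ℝ) : ℂ))) * ψ₁ τ := by fun_prop
  have hc3 : Continuous fun τ =>
      Complex.exp (-(Complex.I * κ * ((a τ : ℝ) : ℂ))) * ((b τ : ℝ) : ℂ) * ψ₁ τ := by fun_prop
  have hc4 : Continuous fun τ =>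
      Complex.exp (-(Complex.I * κ * (a τ : ℂ))) *
        (Complex.exp (-(Complex.I * κ * (b τ : ℂ))) - 1 - (-(Complex.I * κ * (b τ : ℂ)))) *
        ψ₁ τ := by fun_prop
  have hinner : ∀ τ, (inner ℝ (xhat t) (p₁ τ + q τ) : ℝ) = a τ + b τ := fun τ =>
    inner_add_right _ _ _
  -- rewrite the expression as a single integral
  have key : (-γ * ∫ τ in (0 : ℝ)..(2 * π),
              Complex.exp (-(Complex.I * κ * ((inner ℝ (xhat t) (p₁ τ + q τ) : ℝ) : ℂ))) * ψ₁ τ)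
          - (-γ * ∫ τ in (0 : ℝ)..(2 * π),
              Complex.exp (-(Complex.I * κ * ((inner ℝ (xhat t) (p₁ τ) : ℝ) : ℂ))) * ψ₁ τ)
          - Complex.I * κ * γ * ∫ τ in (0 : ℝ)..(2 * π),
              Complex.exp (-(Complex.I * κ * ((inner ℝ (xhat t) (p₁ τ) : ℝ) : ℂ))) *
                ((inner ℝ (xhat t) (q τ) : ℝ) : ℂ) * ψ₁ τ
      = -γ * ∫ τ in (0 : ℝ)..(2 * π),
          Complex.exp (-(Complex.I * κ * (a τ : ℂ))) *
            (Complex.exp (-(Complex.I * κ * (b τ : ℂ))) - 1 - (-(Complex.I * κ * (b τ : ℂ)))) *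
            ψ₁ τ := by
    have h1 : (∫ τ in (0 : ℝ)..(2 * π),
        Complex.exp (-(Complex.I * κ * ((inner ℝ (xhat t) (p₁ τ + q τ) : ℝ) : ℂ))) * ψ₁ τ)
        = ∫ τ in (0 : ℝ)..(2 * π),
          Complex.exp (-(Complex.I * κ * ((a τ + b τ : ℝ) : ℂ))) * ψ₁ τ := by
      refine intervalIntegral.integral_congr fun τ _ => ?_
      rw [hinner]
    rw [h1]
    have h2 : ∀ τ, Complex.exp (-(Complex.I * κ * ((a τ + b τ : ℝ) : ℂ))) * ψ₁ τ
        = Complex.exp (-(Complex.I * κ * (a τ : ℂ))) *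
            (Complex.exp (-(Complex.I * κ * (b τ : ℂ))) - 1 - (-(Complex.I * κ * (b τ : ℂ)))) *
            ψ₁ τ
          + Complex.exp (-(Complex.I * κ * (a τ : ℂ))) * ψ₁ τ
          + (-(Complex.I * κ)) *
            (Complex.exp (-(Complex.I * κ * (a τ : ℂ))) * ((b τ : ℝ) : ℂ) * ψ₁ τ) := by
      intro τ
      have : Complex.exp (-(Complex.I * κ * ((a τ + b τ : ℝ) : ℂ)))
          = Complex.exp (-(Complex.I * κ * (a τ : ℂ))) *
            Complex.exp (-(Complex.I * κ * (b τ : ℂ))) := by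
        rw [← Complex.exp_add]
        push_cast
        ring_nf
      rw [this]; ring
    rw [intervalIntegral.integral_congr (fun τ _ => h2 τ)]
    rw [intervalIntegral.integral_add ((by fun_prop : Continuous fun τ =>
        Complex.exp (-(Complex.I * κ * (a τ : ℂ))) *
          (Complex.exp (-(Complex.I * κ * (b τ : ℂ))) - 1 - (-(Complex.I * κ * (b τ : ℂ)))) * ψ₁ τ
        + Complex.exp (-(Complex.I * κ * (a τ : ℂ))) * ψ₁ τ).intervalIntegrable _ _)
      ((by fun_prop : Continuous fun τ => -(Complex.I * (κ : ℂ)) *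
        (Complex.exp (-(Complex.I * κ * (a τ : ℂ))) * ((b τ : ℝ) : ℂ) * ψ₁ τ)).intervalIntegrable _ _),
      intervalIntegral.integral_add (hc4.intervalIntegrable _ _) (hc2.intervalIntegrable _ _),
      intervalIntegral.integral_const_mul]
    ring
  rw [key]
  -- bound the single integral
  rw [norm_mul, norm_neg]
  have hδκ : min (1 / κ) (ε / D) ≤ 1 / κ := min_le_left _ _
  have hδε : min (1 / κ) (ε / D) ≤ ε / D := min_le_right _ _
  have hbound : ∀ τ ∈ Set.uIoc (0:ℝ) (2*π),
      ‖Complex.exp (-(Complex.I * κ * (a τ : ℂ))) *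
        (Complex.exp (-(Complex.I * κ * (b τ : ℂ))) - 1 - (-(Complex.I * κ * (b τ : ℂ)))) *
        ψ₁ τ‖ ≤ κ ^ 2 * (min (1 / κ) (ε / D) * S) * C := by
    intro τ hτ
    have hτ' : τ ∈ Set.Icc (0:ℝ) (2*π) :=
      Set.mem_Icc_of_Ioc (by rwa [Set.uIoc_of_le (by positivity)] at hτ)
    have hmin0 : (0:ℝ) ≤ min (1 / κ) (ε / D) := le_min (by positivity) (by positivity)
    rw [norm_mul, norm_mul]
    have h1 : ‖Complex.exp (-(Complex.I * κ * (a τ : ℂ)))‖ = 1 := by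
      rw [Complex.norm_exp]
      simp
    have habs : ‖(-(Complex.I * κ * (b τ : ℂ)))‖ = κ * |b τ| := by
      simp [abs_of_pos hκ, Complex.norm_real]
    have hz1 : ‖(-(Complex.I * κ * (b τ : ℂ)))‖ ≤ 1 := by
      rw [habs]
      have := hb_le τ
      have hq1 : ‖q τ‖ ≤ 1 / κ := (hqδ τ).trans hδκ
      calc κ * |b τ| ≤ κ * (1 / κ) := by
            have : |b τ| ≤ 1 / κ := (hb_le τ).trans hq1
            nlinarith
        _ = 1 := by field_simp
    have h2 : ‖Complex.exp (-(Complex.I * κ * (b τ : ℂ))) - 1 -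
        (-(Complex.I * κ * (b τ : ℂ)))‖ ≤ κ ^ 2 * (min (1 / κ) (ε / D) * S) := by
      refine (Complex.norm_exp_sub_one_sub_id_le hz1).trans ?_
      rw [habs]
      have hb1 : |b τ| ≤ min (1 / κ) (ε / D) := (hb_le τ).trans (hqδ τ)
      have hb2 : |b τ| ≤ S := (hb_le τ).trans (hqS τ)
      have hb0 : 0 ≤ |b τ| := abs_nonneg _
      have hbb : |b τ| * |b τ| ≤ min (1 / κ) (ε / D) * S := mul_le_mul hb1 hb2 hb0 hmin0
      calc (κ * |b τ|) ^ 2 = κ ^ 2 * (|b τ| * |b τ|) := by ring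
        _ ≤ κ ^ 2 * (min (1 / κ) (ε / D) * S) :=
            mul_le_mul_of_nonneg_left hbb (sq_nonneg κ)
    rw [h1, one_mul]
    exact mul_le_mul h2 (hC τ hτ') (norm_nonneg _)
      (mul_nonneg (sq_nonneg κ) (mul_nonneg hmin0 hS0))
  have hI := intervalIntegral.norm_integral_le_of_norm_le_const hbound
  calc ‖γ‖ * ‖∫ τ in (0:ℝ)..(2*π),
        Complex.exp (-(Complex.I * κ * (a τ : ℂ))) *
          (Complex.exp (-(Complex.I * κ * (b τ : ℂ))) - 1 - (-(Complex.I * κ * (b τ : ℂ)))) *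
          ψ₁ τ‖
      ≤ ‖γ‖ * (κ ^ 2 * (min (1 / κ) (ε / D) * S) * C * |2 * π - 0|) := by
        exact mul_le_mul_of_nonneg_left hI (norm_nonneg γ)
    _ ≤ ε * S := by
        have habs2 : |2 * π - 0| = 2 * π := by
          rw [sub_zero, abs_of_pos (by positivity)]
        rw [habs2]
        have hδD : min (1 / κ) (ε / D) * D ≤ ε := by
          rw [← le_div_iff₀ hD]; exact hδε
        have hγ0 : 0 ≤ ‖γ‖ := norm_nonneg _
        have hmin0 : 0 ≤ min (1 / κ) (ε / D) := le_min (by positivity) (by positivity)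
        have hfac : ‖γ‖ * (κ ^ 2 * C * (2 * π)) ≤ D := by
          rw [hDdef]
          nlinarith [mul_nonneg (mul_nonneg hγ0 (sq_nonneg κ)) hπ.le,
            mul_nonneg (mul_nonneg hC0 (sq_nonneg κ)) hπ.le,
            mul_nonneg (sq_nonneg κ) hπ.le]
        nlinarith [mul_le_mul_of_nonneg_right hδD hS0,
          mul_le_mul_of_nonneg_right hfac (mul_nonneg hmin0 hS0)]
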